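/- Let B_1 = {0, 11} and define inductively B_{n+1} = {b_1 b_2 ⋯ b_{t(n)} τ(n) : b_i ∈ B_n}, where τ(n) is the concatenation of all elements of B_n (in a fixed enumeration), let X_n be the coded shift generated by B_n, and let X = ⋂_{n≥1} X_n. Let s(n) and ℓ(n) denote the shortest and longest lengths of words in B_n. Suppose the sequence (t(n))_{n≥1} of integers t(n) ≥ 2 satisfies, for all n ≥ 1: s(n)/ℓ(n) < 2/3, t(n) ≥ ℓ(n)/(ℓ(n) − s(n)), and t(n) ≥ (2s(n) + 2ℓ(n) + 3|τ(n)|)/ℓ(n). Then X is topologically mixing. -/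

import Mathlib

/-!
The lengths of the words of `B n` fill the whole interval `[s n, l n]`, so sums of `j` such
words fill `[j s, j l]`; because `3 s < 2 l` these intervals overlap for `j ≥ 2`, and every
length in `[2 s, k l]` is the total length of at most `k` words of `B n`.

Each word of some `B k` lies in the language of `X`: appending `t - 1` further copies of it and
then `τ` gives a word of the next level, and the limit of the nested words so obtained lies in
every `X_m`, because words of `B m` are concatenations of words of `B j` for `j ≤ m`.
Conversely, a word `u` of the language with `|u| ≤ s n` lies within two adjacent words of `B n`,
hence inside a word `p u q` of `B (n + 1)`.

So it suffices to fill every gap `g ≥ 2 s n` between two words `x, y ∈ B n`. If `g ≤ (t - 2) l`,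
then `x`, some words of `B n` and `y` fit inside a single word of `B (n + 1)`. Otherwise `x`,
followed by at most `t - 1` words of `B n` and by `τ n`, ends one word of `B (n + 1)`, and `y`,
preceded by at most `t - 1` words of `B n`, begins another. The gap left between these two
words of `B (n + 1)` is `0`, the length of one word of `B (n + 1)`, or at least `2 s (n + 1)`,
and in the last case strong induction on `g` applies. The inequalities assumed for `t n` make
these cases cover every `g ≥ 2 s n`.
-/

open MeasureTheory Filter Topology

namespace DbarPaper

variable {A : Type} [Fintype A] [DecidableEq A] [Inhabited A]
  [TopologicalSpace A] [DiscreteTopology A]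
  [MeasurableSpace A] [MeasurableSingletonClass A]

/-- The shift map on the full shift `𝒜^∞ = ℕ → A`. -/
def shift : (ℕ → A) → (ℕ → A) := fun x n => x (n + 1)

/-- A shift space: a nonempty, closed, shift-invariant subset of the full shift. -/
def ShiftSpace (X : Set (ℕ → A)) : Prop :=
  X.Nonempty ∧ IsClosed X ∧ ∀ x ∈ X, shift x ∈ X

/-- The word `w` appears in the sequence `x`. -/
def occursIn (w : List A) (x : ℕ → A) : Prop :=
  ∃ i : ℕ, w = List.ofFn (fun k : Fin w.length => x (i + (k : ℕ)))

/-- The language of a set `X`: all finite words appearing in points of `X`. -/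
def lang (X : Set (ℕ → A)) : Set (List A) := {w | ∃ x ∈ X, occursIn w x}

/-- Words of length `n` in the language of `X`. -/
def langN (n : ℕ) (X : Set (ℕ → A)) : Set (List A) := {w | w ∈ lang X ∧ w.length = n}

/-- The pseudometric `d̄` on the full shift. -/
noncomputable def dbar (x y : ℕ → A) : ℝ :=
  Filter.limsup
    (fun n => (((Finset.range n).filter (fun j => x j ≠ y j)).card : ℝ) / (n : ℝ))
    Filter.atTop

/-- Hausdorff "distance" between two sets induced by a `ℝ`-valued distance. -/
noncomputable def hausdist {Z : Type*} (d : Z → Z → ℝ) (P Q : Set Z) : ℝ :=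
  max (⨆ p : P, ⨅ q : Q, d p q) (⨆ q : Q, ⨅ p : P, d p q)

/-- A probability measure is shift-invariant. -/
def invariantPM (μ : ProbabilityMeasure (ℕ → A)) : Prop :=
  (μ : Measure (ℕ → A)).map shift = (μ : Measure (ℕ → A))

/-- `M_σ(X)`: shift-invariant Borel probability measures giving `X` full measure. -/
def Msigma (X : Set (ℕ → A)) : Set (ProbabilityMeasure (ℕ → A)) :=
  {μ | invariantPM μ ∧ μ X = 1}

/-- `ξ` is a joining of `μ` and `ν`: a `σ×σ`-invariant measure on the product with
marginals `μ` and `ν`. -/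
def IsJoining (ξ : Measure ((ℕ → A) × (ℕ → A))) (μ ν : ProbabilityMeasure (ℕ → A)) : Prop :=
  ξ.map (Prod.map shift shift) = ξ ∧
  ξ.map Prod.fst = (μ : Measure (ℕ → A)) ∧ ξ.map Prod.snd = (ν : Measure (ℕ → A))

/-- Ornstein's metric `d̄_M` on invariant measures. -/
noncomputable def dbarM (μ ν : ProbabilityMeasure (ℕ → A)) : ℝ :=
  sInf {r : ℝ | ∃ ξ : Measure ((ℕ → A) × (ℕ → A)),
    IsJoining ξ μ ν ∧ r = (ξ {p | p.1 0 ≠ p.2 0}).toReal}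

/-- `d̄_M`-stability of a shift space (Austin). -/
def DbarMStable (X : Set (ℕ → A)) : Prop :=
  ∀ ε : ℝ, 0 < ε → ∃ U : Set (ProbabilityMeasure (ℕ → A)), IsOpen U ∧ Msigma X ⊆ U ∧
    ∀ ν ∈ U, invariantPM ν → ∃ μ ∈ Msigma X, dbarM μ ν < ε

/-- The infinite concatenation of a sequence of (nonempty) words. -/
def concatSeq (w : ℕ → List A) : ℕ → A := fun n =>
  ((List.ofFn (fun i : Fin (n + 1) => w (i : ℕ))).flatten).getD n default

/-- The `d̄`-shadowing property. -/
def DbarShadowing (X : Set (ℕ → A)) : Prop :=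
  ∀ ε : ℝ, 0 < ε → ∃ N : ℕ, 0 < N ∧ ∀ w : ℕ → List A,
    (∀ j, w j ∈ lang X) → (∀ j, N ≤ (w j).length) →
    ∃ x' ∈ X, dbar (concatSeq w) x' < ε

/-- `U_n(X)`: the union of cylinders of words of length `n` in the language of `X`. -/
def cylNbhd (X : Set (ℕ → A)) (n : ℕ) : Set (ℕ → A) :=
  {x | List.ofFn (fun k : Fin n => x (k : ℕ)) ∈ lang X}

/-- The `n`-th (topological) Markov approximation of `X`: all sequences whose subwords of
length `n+1` belong to the language of `X`. -/
def markovApprox (X : Set (ℕ → A)) (n : ℕ) : Set (ℕ → A) :=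
  {x | ∀ i : ℕ, List.ofFn (fun k : Fin (n + 1) => x (i + (k : ℕ))) ∈ lang X}

/-- Transitivity, in terms of the language. -/
def TransitiveShift (X : Set (ℕ → A)) : Prop :=
  ∀ u ∈ lang X, ∀ w ∈ lang X, ∃ v : List A, u ++ v ++ w ∈ lang X

/-- Topological mixing, in terms of the language. -/
def MixingShift (X : Set (ℕ → A)) : Prop :=
  ∀ u ∈ lang X, ∀ w ∈ lang X, ∃ N : ℕ, ∀ m : ℕ, N ≤ m →
    ∃ v : List A, v.length = m ∧ u ++ v ++ w ∈ lang X

/-- Chain mixing: all but finitely many Markov approximations are topologically mixing. -/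
def ChainMixing (X : Set (ℕ → A)) : Prop :=
  ∃ N : ℕ, ∀ n : ℕ, N ≤ n → MixingShift (markovApprox X n)

/-- `C` is the measure center of `X`: the smallest shift space contained in `X` of full
measure for every invariant measure of `X`. -/
def IsMeasureCenter (X C : Set (ℕ → A)) : Prop :=
  ShiftSpace C ∧ C ⊆ X ∧ (∀ μ ∈ Msigma X, μ C = 1) ∧
  ∀ Y : Set (ℕ → A), ShiftSpace Y → Y ⊆ X → (∀ μ ∈ Msigma X, μ Y = 1) → C ⊆ Y

/-- Measure of the cylinder determined by a word of length `n`. -/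
noncomputable def cylMeasure (μ : ProbabilityMeasure (ℕ → A)) {n : ℕ} (w : Fin n → A) : ℝ :=
  ((μ : Measure (ℕ → A)) {x | ∀ k : Fin n, x (k : ℕ) = w k}).toReal

/-- Entropy of the partition into cylinders of length `n`. -/
noncomputable def blockEntropy (μ : ProbabilityMeasure (ℕ → A)) (n : ℕ) : ℝ :=
  -∑ w : Fin n → A, cylMeasure μ w * Real.log (cylMeasure μ w)

/-- Kolmogorov–Sinai entropy of a shift-invariant measure. -/
noncomputable def ksEntropy (μ : ProbabilityMeasure (ℕ → A)) : ℝ :=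
  Filter.limsup (fun n => blockEntropy μ n / (n : ℝ)) Filter.atTop

/-- `μ` is ergodic for the shift. -/
def ErgodicPM (μ : ProbabilityMeasure (ℕ → A)) : Prop :=
  Ergodic shift (μ : Measure (ℕ → A))

/-- Ergodic measures are entropy dense in `M_σ(X)`. -/
def EntropyDense (X : Set (ℕ → A)) : Prop :=
  ∀ μ ∈ Msigma X, ∀ U : Set (ProbabilityMeasure (ℕ → A)), IsOpen U → μ ∈ U →
    ∀ ε : ℝ, 0 < ε →
      ∃ ν ∈ Msigma X, ν ∈ U ∧ ErgodicPM ν ∧ |ksEntropy ν - ksEntropy μ| < ε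

/-- Topological entropy of a shift space. -/
noncomputable def topEntropy (X : Set (ℕ → A)) : ℝ :=
  Filter.limsup (fun n => Real.log (Nat.card ↥(langN n X)) / (n : ℝ)) Filter.atTop

/-- The standard metric on the full shift. -/
noncomputable def rho (x y : ℕ → A) : ℝ :=
  open scoped Classical in
  if x = y then 0 else (2 : ℝ) ^ (-((sInf {j : ℕ | x j ≠ y j} : ℕ) : ℤ))

/-- Proximality of a shift space. -/
def ProximalShift (X : Set (ℕ → A)) : Prop :=
  ∀ x ∈ X, ∀ y ∈ X,
    Filter.liminf (fun n => rho (shift^[n] x) (shift^[n] y)) Filter.atTop = 0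

/-- Minimality of a shift space. -/
def MinimalShift (X : Set (ℕ → A)) : Prop :=
  ShiftSpace X ∧ ∀ Y : Set (ℕ → A), ShiftSpace Y → Y ⊆ X → Y = X

/-- An `A`-labeled directed multigraph on vertices `V` with edges `E`. -/
structure LabeledGraph (A V E : Type*) where
  src : E → V
  dst : E → V
  lab : E → A

namespace LabeledGraph

variable {A' V E : Type*}

/-- `es` is a path in `G` from `u` to `v`. -/
def PathFromTo (G : LabeledGraph A' V E) (es : List E) (u v : V) : Prop :=
  es.Chain' (fun e f => G.dst e = G.src f) ∧
  es.head?.map G.src = some u ∧ es.getLast?.map G.dst = some v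

/-- `G` is strongly connected. -/
def StronglyConnected (G : LabeledGraph A' V E) : Prop :=
  ∀ u v : V, ∃ es : List E, G.PathFromTo es u v

/-- `d` is the period of `G`: the gcd of lengths of closed paths. -/
def HasPeriod (G : LabeledGraph A' V E) (d : ℕ) : Prop :=
  (∀ (es : List E) (u : V), G.PathFromTo es u u → d ∣ es.length) ∧
  ∀ d' : ℕ, (∀ (es : List E) (u : V), G.PathFromTo es u u → d' ∣ es.length) → d' ∣ d

/-- `b` is a safe symbol for `G`. -/
def SafeSymbol (G : LabeledGraph A' V E) (b : A') : Prop :=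
  ∀ e : E, ∃ e' : E, G.src e' = G.src e ∧ G.dst e' = G.dst e ∧ G.lab e' = b

/-- The shift space presented by the labeled graph `G`: labels read along infinite paths. -/
def presents (G : LabeledGraph A' V E) : Set (ℕ → A') :=
  {x | ∃ e : ℕ → E, (∀ j, G.dst (e j) = G.src (e (j + 1))) ∧ ∀ j, x j = G.lab (e j)}

end LabeledGraph

/-- The coupling of a family of labeled graphs: an edge labeled `a` from `v` to `v'` exists
iff each `G k` has an edge from `v k` to `v' k` labeled `a`. -/
def coupling {A' : Type*} {n : ℕ} {V E : Fin n → Type*}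
    (G : ∀ k, LabeledGraph A' (V k) (E k)) :
    LabeledGraph A' (∀ k, V k) {p : (∀ k, E k) × A' // ∀ k, (G k).lab (p.1 k) = p.2} where
  src p := fun k => (G k).src (p.1.1 k)
  dst p := fun k => (G k).dst (p.1.1 k)
  lab p := p.1.2

/-- Sofic shift spaces: those presented by some finite labeled graph. -/
def Sofic (X : Set (ℕ → A)) : Prop :=
  ∃ (V E : Type) (_ : Fintype V) (_ : Fintype E) (G : LabeledGraph A V E),
    X = G.presents

/-- The coded shift generated by a finite set of words `B`: the closure of the set of all
shifts of infinite concatenations of words from `B`. -/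
def codedShift (B : Finset (List A)) : Set (ℕ → A) :=
  closure {x | ∃ (b : ℕ → List A) (k : ℕ), (∀ i, b i ∈ B) ∧ x = shift^[k] (concatSeq b)}

/-- The length of a shortest word in `B`. -/
noncomputable def minLen (B : Finset (List Bool)) : ℕ :=
  sInf (List.length '' (B : Set (List Bool)))

/-- The length of a longest word in `B`. -/
noncomputable def maxLen (B : Finset (List Bool)) : ℕ :=
  sSup (List.length '' (B : Set (List Bool)))

theorem exists_add_eq_of_le_of_le {a₁ b₁ a₂ b₂ S : ℕ} (h₁ : a₁ ≤ b₁) (h₂ : a₂ ≤ b₂)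
    (hS₁ : a₁ + a₂ ≤ S) (hS₂ : S ≤ b₁ + b₂) :
    ∃ x y, a₁ ≤ x ∧ x ≤ b₁ ∧ a₂ ≤ y ∧ y ≤ b₂ ∧ x + y = S :=
  ⟨min b₁ (S - a₂), S - min b₁ (S - a₂), by omega, by omega, by omega, by omega, by omega⟩

theorem exists_mul_le_le_mul {s l k S : ℕ} (hsl : 3 * s ≤ 2 * l) (hk : 2 ≤ k)
    (h₁ : 2 * s ≤ S) (h₂ : S ≤ k * l) : ∃ j, 2 ≤ j ∧ j ≤ k ∧ j * s ≤ S ∧ S ≤ j * l := by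
  classical
  have hex : ∃ j, 2 ≤ j ∧ S ≤ j * l := ⟨k, hk, h₂⟩
  obtain ⟨hj, hjS⟩ := Nat.find_spec hex
  refine ⟨Nat.find hex, hj, Nat.find_min' hex ⟨hk, h₂⟩, ?_, hjS⟩
  obtain ⟨i, hi⟩ := Nat.exists_eq_add_of_le hj
  cases i with
  | zero => rwa [hi]
  | succ i =>
    have hlt : (i + 2) * l < S := by
      have := Nat.find_min hex (m := i + 2) (by omega)
      simp only [not_and, not_le] at this
      exact this (by omega)
    rw [hi]
    nlinarith

section Sequences

variable {α : Type}

theorem shift_iterate_apply (x : ℕ → α) (k i : ℕ) : shift^[k] x i = x (i + k) := by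
  induction k generalizing i with
  | zero => rfl
  | succ k ih =>
    rw [Function.iterate_succ_apply', shift, ih]
    ac_rfl

theorem occursIn_iff_exists_infix {u : List α} {x : ℕ → α} :
    occursIn u x ↔ ∃ N, u <:+: List.ofFn (fun k : Fin N => x k) := by
  constructor
  · rintro ⟨i, hu⟩
    refine ⟨i + u.length, List.infix_iff_getElem?.2 ⟨i, by simp [Nat.add_comm], fun k hk => ?_⟩⟩
    rw [List.getElem_of_eq hu hk]
    simp [Nat.add_comm k i]
    omega
  · rintro ⟨N, hu⟩
    obtain ⟨i, -, h⟩ := List.infix_iff_getElem?.1 hu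
    refine ⟨i, List.ext_getElem (by simp) fun k hk _ => ?_⟩
    have := h k hk
    simp only [List.getElem?_ofFn] at this
    split_ifs at this
    simp_all [Nat.add_comm i k]

theorem lang_mono {X Y : Set (ℕ → α)} (h : X ⊆ Y) : lang X ⊆ lang Y :=
  fun _ ⟨x, hx, hu⟩ => ⟨x, h hx, hu⟩

theorem lang_of_infix {X : Set (ℕ → α)} {u v : List α} (hu : u ∈ lang X) (hv : v <:+: u) :
    v ∈ lang X := by
  obtain ⟨x, hx, hocc⟩ := hu
  obtain ⟨N, hN⟩ := occursIn_iff_exists_infix.1 hocc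
  exact ⟨x, hx, occursIn_iff_exists_infix.2 ⟨N, hv.trans hN⟩⟩

theorem mem_lang_of_forall_getElem {X : Set (ℕ → α)} {x : ℕ → α} (hx : x ∈ X) {w : List α}
    (h : ∀ k (hk : k < w.length), x k = w[k]) : w ∈ lang X :=
  ⟨x, hx, 0, List.ext_getElem (by simp) fun k hk _ => by simp [h k hk]⟩

theorem mem_closure_iff_forall_agree [TopologicalSpace α] [DiscreteTopology α]
    {S : Set (ℕ → α)} {x : ℕ → α} : x ∈ closure S ↔ ∀ N, ∃ y ∈ S, ∀ i < N, y i = x i := by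
  rw [(PiNat.isTopologicalBasis_cylinders fun _ => α).mem_closure_iff]
  constructor
  · intro h N
    obtain ⟨y, hy, hyS⟩ := h _ ⟨x, N, rfl⟩ (PiNat.self_mem_cylinder x N)
    exact ⟨y, hyS, PiNat.mem_cylinder_iff.1 hy⟩
  · rintro h _ ⟨z, N, rfl⟩ hx
    obtain ⟨y, hyS, hy⟩ := h N
    rw [PiNat.mem_cylinder_iff_eq] at hx
    exact ⟨y, hx ▸ PiNat.mem_cylinder_iff.2 hy, hyS⟩

theorem flatten_ofFn_prefix (b : ℕ → List α) {M M' : ℕ} (h : M ≤ M') :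
    (List.ofFn fun i : Fin M => b i).flatten <+: (List.ofFn fun i : Fin M' => b i).flatten := by
  obtain ⟨k, rfl⟩ := Nat.exists_eq_add_of_le h
  rw [List.ofFn_add, List.flatten_append]
  exact List.prefix_append_of_prefix (by simp)

theorem le_length_flatten_ofFn {b : ℕ → List α} (hb : ∀ i, b i ≠ []) (M : ℕ) :
    M ≤ (List.ofFn fun i : Fin M => b i).flatten.length := by
  rw [List.length_flatten, List.map_ofFn, List.sum_ofFn]
  simpa using Finset.card_nsmul_le_sum Finset.univ (fun i : Fin M => (b i).length) 1
    fun i _ => List.length_pos_iff.2 (hb i)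

theorem concatSeq_eq_getElem [Inhabited α] {b : ℕ → List α} (hb : ∀ i, b i ≠ []) {M k : ℕ}
    (hk : k < (List.ofFn fun i : Fin M => b i).flatten.length) :
    concatSeq b k = (List.ofFn fun i : Fin M => b i).flatten[k] := by
  have hk' : k < (List.ofFn fun i : Fin (k + 1) => b i).flatten.length :=
    le_length_flatten_ofFn hb (k + 1)
  rw [concatSeq, List.getD_eq_getElem _ _ hk']
  rcases le_total (k + 1) M with h | h
  · exact (flatten_ofFn_prefix b h).getElem hk'
  · exact ((flatten_ofFn_prefix b h).getElem hk).symm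

theorem mem_codedShift_iff [Inhabited α] [TopologicalSpace α] [DiscreteTopology α]
    {B : Finset (List α)} {x : ℕ → α} :
    x ∈ codedShift B ↔ ∀ N, ∃ (b : ℕ → List α) (k : ℕ), (∀ i, b i ∈ B) ∧
      ∀ i < N, concatSeq b (i + k) = x i := by
  rw [codedShift, mem_closure_iff_forall_agree]
  refine forall_congr' fun N => ⟨?_, ?_⟩
  · rintro ⟨_, ⟨b, k, hb, rfl⟩, h⟩
    exact ⟨b, k, hb, fun i hi => by rw [← h i hi, shift_iterate_apply]⟩
  · rintro ⟨b, k, hb, h⟩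
    exact ⟨_, ⟨b, k, hb, rfl⟩, fun i hi => by rw [shift_iterate_apply, h i hi]⟩

theorem exists_infix_flatten_of_mem_lang [Inhabited α] [TopologicalSpace α] [DiscreteTopology α]
    {B : Finset (List α)} (hB : ∀ b ∈ B, b ≠ []) {u : List α} (hu : u ∈ lang (codedShift B)) :
    ∃ bs : List (List α), (∀ b ∈ bs, b ∈ B) ∧ u <:+: bs.flatten := by
  obtain ⟨x, hx, hocc⟩ := hu
  obtain ⟨N, hN⟩ := occursIn_iff_exists_infix.1 hocc
  obtain ⟨b, k, hb, hagree⟩ := mem_codedShift_iff.1 hx N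
  have hb' : ∀ i, b i ≠ [] := fun i => hB _ (hb i)
  refine ⟨List.ofFn fun i : Fin (k + N) => b i, by simp [List.mem_ofFn, hb], hN.trans ?_⟩
  have hlen := le_length_flatten_ofFn hb' (k + N)
  refine List.infix_iff_getElem?.2 ⟨k, by simpa [Nat.add_comm] using hlen, fun i hi => ?_⟩
  simp only [List.length_ofFn] at hi
  rw [List.getElem?_eq_getElem (by omega), ← concatSeq_eq_getElem hb', List.getElem_ofFn,
    hagree i hi]

theorem mem_codedShift_of_forall_exists [Inhabited α] [TopologicalSpace α] [DiscreteTopology α]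
    {B : Finset (List α)} (hB : ∀ b ∈ B, b ≠ []) {x : ℕ → α}
    (h : ∀ N, ∃ ws : List (List α), (∀ w ∈ ws, w ∈ B) ∧ N < ws.flatten.length ∧
      ∀ i (hi : i < ws.flatten.length), x i = ws.flatten[i]) : x ∈ codedShift B := by
  refine mem_codedShift_iff.2 fun N => ?_
  obtain ⟨ws, hws, hN, hx⟩ := h N
  obtain ⟨w₀, hw₀⟩ := List.exists_mem_of_ne_nil ws (by rintro rfl; simp at hN)
  have hb : ∀ i, ws.getD i w₀ ∈ B := fun i => by
    rw [List.getD_eq_getElem?_getD]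
    cases h : ws[i]? with
    | none => exact hws _ hw₀
    | some w => exact hws _ (List.mem_of_getElem? h)
  have hws' : (List.ofFn fun i : Fin ws.length => ws.getD i w₀) = ws :=
    List.ext_getElem (by simp) fun i _ _ => by simp
  refine ⟨fun i => ws.getD i w₀, 0, hb, fun i hi => ?_⟩
  have hi' : i < (List.ofFn fun j : Fin ws.length => ws.getD j w₀).flatten.length := by
    rw [hws']; omega
  rw [Nat.add_zero, concatSeq_eq_getElem (fun j => hB _ (hb j)) hi', hx i (by omega)]
  simp only [hws']

theorem exists_forall_getElem_eq_of_prefix [Inhabited α] {β : ℕ → List α}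
    (hβ : ∀ i, β i <+: β (i + 1)) (hlen : ∀ i, i < (β i).length) :
    ∃ x : ℕ → α, ∀ i k (hk : k < (β i).length), x k = (β i)[k] := by
  have hmono : ∀ i j, i ≤ j → β i <+: β j := fun i j hij => by
    induction j, hij using Nat.le_induction with
    | base => exact List.prefix_refl _
    | succ j _ ih => exact ih.trans (hβ j)
  refine ⟨fun k => (β (k + 1)).getD k default, fun i k hk => ?_⟩
  have hk' : k < (β (k + 1)).length := (hlen (k + 1)).trans' (by omega)
  simp only [List.getD_eq_getElem _ _ hk']
  rcases le_total i (k + 1) with h | h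
  · exact ((hmono _ _ h).getElem hk).symm
  · exact (hmono _ _ h).getElem hk'

theorem exists_infix_append_of_infix_flatten {u : List α} (hu : u ≠ []) :
    ∀ {bs : List (List α)}, (∀ b ∈ bs, u.length ≤ b.length) → u <:+: bs.flatten →
      ∃ b₁ ∈ bs, ∃ b₂ ∈ bs, u <:+: b₁ ++ b₂
  | [], _, h => absurd (List.eq_nil_of_infix_nil h) hu
  | b :: bs, hlen, h => by
    rw [List.flatten_cons, List.infix_append_iff] at h
    rcases h with h | h | ⟨u₁, u₂, rfl, h₁, h₂⟩
    · exact ⟨b, by simp, b, by simp, List.infix_append_of_infix_left h⟩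
    · obtain ⟨b₁, h₁, b₂, h₂, h⟩ :=
        exists_infix_append_of_infix_flatten hu (fun b' hb' => hlen b' (by simp [hb'])) h
      exact ⟨b₁, by simp [h₁], b₂, by simp [h₂], h⟩
    · cases bs with
      | nil =>
        obtain rfl := List.eq_nil_of_prefix_nil h₂
        exact ⟨b, by simp, b, by simp, List.infix_append_of_infix_left (by simpa using h₁.isInfix)⟩
      | cons b' bs =>
        have h₂' : u₂ <+: b' := List.prefix_of_prefix_length_le h₂ (by simp)
          (by have := hlen b' (by simp); simp at this; omega)
        exact ⟨b, by simp, b', by simp, List.infix_append_iff.2 (.inr (.inr ⟨_, _, rfl, h₁, h₂'⟩))⟩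

theorem exists_flatten_length_eq {C : Set (List α)} {a b : ℕ} (hab : a ≤ b)
    (hC : Set.Icc a b ⊆ List.length '' C) :
    ∀ j S, j * a ≤ S → S ≤ j * b →
      ∃ ws : List (List α), ws.length = j ∧ (∀ w ∈ ws, w ∈ C) ∧ ws.flatten.length = S
  | 0, S, _, h => ⟨[], rfl, by simp, by simp at h ⊢; omega⟩
  | j + 1, S, h₁, h₂ => by
    obtain ⟨x, y, hx₁, hx₂, hy₁, hy₂, rfl⟩ := exists_add_eq_of_le_of_le (S := S) hab
      (Nat.mul_le_mul_left j hab) (by rw [Nat.succ_mul] at h₁; omega)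
      (by rw [Nat.succ_mul] at h₂; omega)
    obtain ⟨w, hw, rfl⟩ := hC ⟨hx₁, hx₂⟩
    obtain ⟨ws, hlen, hws, rfl⟩ := exists_flatten_length_eq hab hC j _ hy₁ hy₂
    exact ⟨w :: ws, by simp [hlen], List.forall_mem_cons.2 ⟨hw, hws⟩, by simp⟩

theorem length_flatten_mem_Icc {bs : List (List α)} {a b : ℕ}
    (h : ∀ w ∈ bs, w.length ∈ Set.Icc a b) :
    bs.flatten.length ∈ Set.Icc (bs.length * a) (bs.length * b) := by
  rw [List.length_flatten]
  constructor
  · simpa using List.card_nsmul_le_sum (bs.map List.length) a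
      (by simpa using fun w hw => (h w hw).1)
  · simpa using List.sum_le_card_nsmul (bs.map List.length) b
      (by simpa using fun w hw => (h w hw).2)

end Sequences

theorem minLen_eq_of_image_eq {B : Finset (List Bool)} {a b : ℕ}
    (h : List.length '' (B : Set (List Bool)) = Set.Icc a b) (hab : a ≤ b) : minLen B = a := by
  rw [minLen, h, csInf_Icc hab]

theorem maxLen_eq_of_image_eq {B : Finset (List Bool)} {a b : ℕ}
    (h : List.length '' (B : Set (List Bool)) = Set.Icc a b) (hab : a ≤ b) : maxLen B = b := by
  rw [maxLen, h, csSup_Icc hab]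

structure BlockSystem where
  B : ℕ → Finset (List Bool)
  t : ℕ → ℕ
  τ : ℕ → List Bool
  B_one : B 1 = {[false], [true, true]}
  τ_perm : ∀ n : ℕ, 1 ≤ n → ∃ l : List (List Bool), l.Perm (B n).toList ∧ τ n = l.flatten
  B_succ : ∀ n : ℕ, 1 ≤ n → (B (n + 1) : Set (List Bool)) =
    {w | ∃ bs : List (List Bool), bs.length = t n ∧ (∀ b ∈ bs, b ∈ B n) ∧ w = bs.flatten ++ τ n}
  ratio_lt : ∀ n : ℕ, 1 ≤ n → (minLen (B n) : ℝ) / (maxLen (B n) : ℝ) < 2 / 3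
  t_ge : ∀ n : ℕ, 1 ≤ n → (2 * (minLen (B n) : ℝ) + 2 * (maxLen (B n) : ℝ) +
    3 * ((τ n).length : ℝ)) / (maxLen (B n) : ℝ) ≤ (t n : ℝ)

namespace BlockSystem

open Computability

variable (c : BlockSystem)

noncomputable def s (n : ℕ) : ℕ := minLen (c.B n)

noncomputable def l (n : ℕ) : ℕ := maxLen (c.B n)

def X : Set (ℕ → Bool) := ⋂ n : ℕ, codedShift (c.B (n + 1))

def HasGap (x y : List Bool) (g : ℕ) : Prop :=
  ∃ v : List Bool, v.length = g ∧ x ++ v ++ y ∈ lang c.X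

def words (n : ℕ) : Language Bool := (c.B n : Set (List Bool))

variable {n : ℕ}

theorem mem_B_succ (hn : 1 ≤ n) {w : List Bool} :
    w ∈ c.B (n + 1) ↔ ∃ bs : List (List Bool), bs.length = c.t n ∧ (∀ b ∈ bs, b ∈ c.B n) ∧
      w = bs.flatten ++ c.τ n := by
  simpa using Set.ext_iff.1 (c.B_succ n hn) w

theorem τ_mem_kstar (hn : 1 ≤ n) : c.τ n ∈ (c.words n)∗ := by
  obtain ⟨L, hL, hτ⟩ := c.τ_perm n hn
  exact hτ ▸ Language.join_mem_kstar fun b hb => Finset.mem_toList.1 (hL.subset hb)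

theorem length_le_length_τ (hn : 1 ≤ n) {b : List Bool} (hb : b ∈ c.B n) :
    b.length ≤ (c.τ n).length := by
  obtain ⟨L, hL, hτ⟩ := c.τ_perm n hn
  exact hτ ▸ (List.infix_of_mem_flatten (hL.symm.subset (Finset.mem_toList.2 hb))).length_le

theorem image_length_B_succ (hn : 1 ≤ n) {a b : ℕ} (hab : a ≤ b)
    (h : List.length '' (c.B n : Set (List Bool)) = Set.Icc a b) :
    List.length '' (c.B (n + 1) : Set (List Bool)) =
      Set.Icc (c.t n * a + (c.τ n).length) (c.t n * b + (c.τ n).length) := by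
  ext m
  simp only [Set.mem_image, Finset.mem_coe, Set.mem_Icc, c.mem_B_succ hn]
  constructor
  · rintro ⟨_, ⟨bs, hlen, hbs, rfl⟩, rfl⟩
    obtain ⟨h₁, h₂⟩ := length_flatten_mem_Icc fun w hw => h ▸ Set.mem_image_of_mem _ (hbs w hw)
    rw [hlen] at h₁ h₂
    simp only [List.length_append]
    exact ⟨by omega, by omega⟩
  · rintro ⟨h₁, h₂⟩
    obtain ⟨bs, hlen, hbs, hS⟩ := exists_flatten_length_eq hab h.symm.subset (c.t n)
      (m - (c.τ n).length) (by omega) (by omega)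
    exact ⟨_, ⟨bs, hlen, hbs, rfl⟩, by simp only [List.length_append, hS]; omega⟩

theorem s_pos_and_image_length_B : ∀ n, 1 ≤ n → 0 < c.s n ∧ c.s n ≤ c.l n ∧
    List.length '' (c.B n : Set (List Bool)) = Set.Icc (c.s n) (c.l n) := by
  intro n hn
  induction n, hn using Nat.le_induction with
  | base =>
    have h : List.length '' (c.B 1 : Set (List Bool)) = Set.Icc 1 2 := by
      ext m
      simp only [c.B_one, Finset.coe_insert, Finset.coe_singleton, Set.image_insert_eq,
        Set.image_singleton, Set.mem_insert_iff, Set.mem_singleton_iff, Set.mem_Icc]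
      simp only [List.length_cons, List.length_nil]
      omega
    rw [s, l, minLen_eq_of_image_eq h (by norm_num), maxLen_eq_of_image_eq h (by norm_num)]
    exact ⟨by norm_num, by norm_num, h⟩
  | succ n hn ih =>
    obtain ⟨hs, hsl, hI⟩ := ih
    have hab := Nat.add_le_add_right (Nat.mul_le_mul_left (c.t n) hsl) (c.τ n).length
    have hI' := c.image_length_B_succ hn hsl hI
    obtain ⟨b, hb, hbs⟩ := hI.symm.subset (Set.left_mem_Icc.2 hsl)
    have hτ := c.length_le_length_τ hn hb
    rw [s, l, minLen_eq_of_image_eq hI' hab, maxLen_eq_of_image_eq hI' hab]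
    exact ⟨by omega, hab, hI'⟩

theorem s_pos (hn : 1 ≤ n) : 0 < c.s n := (c.s_pos_and_image_length_B n hn).1

theorem s_le_l (hn : 1 ≤ n) : c.s n ≤ c.l n := (c.s_pos_and_image_length_B n hn).2.1

theorem image_length_B (hn : 1 ≤ n) :
    List.length '' (c.B n : Set (List Bool)) = Set.Icc (c.s n) (c.l n) :=
  (c.s_pos_and_image_length_B n hn).2.2

theorem length_mem_Icc (hn : 1 ≤ n) {b : List Bool} (hb : b ∈ c.B n) :
    b.length ∈ Set.Icc (c.s n) (c.l n) :=
  c.image_length_B hn ▸ Set.mem_image_of_mem _ hb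

theorem ne_nil_of_mem_B (hn : 1 ≤ n) {b : List Bool} (hb : b ∈ c.B n) : b ≠ [] :=
  List.length_pos_iff.1 ((c.s_pos hn).trans_le (c.length_mem_Icc hn hb).1)

theorem exists_length_eq (hn : 1 ≤ n) {m : ℕ} (h₁ : c.s n ≤ m) (h₂ : m ≤ c.l n) :
    ∃ b ∈ c.B n, b.length = m :=
  (c.image_length_B hn).symm.subset ⟨h₁, h₂⟩

theorem s_succ (hn : 1 ≤ n) : c.s (n + 1) = c.t n * c.s n + (c.τ n).length :=
  minLen_eq_of_image_eq (c.image_length_B_succ hn (c.s_le_l hn) (c.image_length_B hn))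
    (Nat.add_le_add_right (Nat.mul_le_mul_left _ (c.s_le_l hn)) _)

theorem l_succ (hn : 1 ≤ n) : c.l (n + 1) = c.t n * c.l n + (c.τ n).length :=
  maxLen_eq_of_image_eq (c.image_length_B_succ hn (c.s_le_l hn) (c.image_length_B hn))
    (Nat.add_le_add_right (Nat.mul_le_mul_left _ (c.s_le_l hn)) _)

theorem three_mul_s_lt (hn : 1 ≤ n) : 3 * c.s n < 2 * c.l n := by
  have hl : (0 : ℝ) < c.l n := by exact_mod_cast (c.s_pos hn).trans_le (c.s_le_l hn)
  have h := c.ratio_lt n hn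
  rw [← s, ← l, div_lt_iff₀ hl] at h
  exact_mod_cast (by linarith : (3 * c.s n : ℝ) < 2 * c.l n)

theorem l_le_length_τ (hn : 1 ≤ n) : c.l n ≤ (c.τ n).length := by
  obtain ⟨b, hb, hbl⟩ := c.exists_length_eq hn (c.s_le_l hn) le_rfl
  exact hbl ▸ c.length_le_length_τ hn hb

theorem add_length_τ_le_t_mul_l (hn : 1 ≤ n) :
    2 * c.s n + 2 * c.l n + 3 * (c.τ n).length ≤ c.t n * c.l n := by
  have hl : (0 : ℝ) < c.l n := by exact_mod_cast (c.s_pos hn).trans_le (c.s_le_l hn)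
  have h := c.t_ge n hn
  rw [← s, ← l, div_le_iff₀ hl] at h
  exact_mod_cast h

theorem six_le_t (hn : 1 ≤ n) : 6 ≤ c.t n := by
  have h := c.add_length_τ_le_t_mul_l hn
  have := c.l_le_length_τ hn
  have := c.s_pos hn
  by_contra! ht
  have : c.t n * c.l n ≤ 5 * c.l n := Nat.mul_le_mul_right _ (by omega)
  omega

theorem self_le_s : ∀ n, 1 ≤ n → n ≤ c.s n := by
  intro n hn
  induction n, hn using Nat.le_induction with
  | base => exact c.s_pos le_rfl
  | succ n hn ih =>
    have := c.l_le_length_τ hn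
    have := c.s_pos hn
    rw [c.s_succ hn]
    nlinarith [c.six_le_t hn]

theorem exists_words_length_eq (hn : 1 ≤ n) {j S : ℕ} (h₁ : j * c.s n ≤ S) (h₂ : S ≤ j * c.l n) :
    ∃ fs : List (List Bool), fs.length = j ∧ (∀ f ∈ fs, f ∈ c.B n) ∧ fs.flatten.length = S :=
  exists_flatten_length_eq (c.s_le_l hn) (c.image_length_B hn).symm.subset j S h₁ h₂

theorem exists_words_of_two_mul_s_le (hn : 1 ≤ n) {k S : ℕ} (hk : 2 ≤ k) (h₁ : 2 * c.s n ≤ S)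
    (h₂ : S ≤ k * c.l n) :
    ∃ fs : List (List Bool), fs.length ≤ k ∧ (∀ f ∈ fs, f ∈ c.B n) ∧ fs.flatten.length = S := by
  obtain ⟨j, -, hjk, hj₁, hj₂⟩ := exists_mul_le_le_mul (c.three_mul_s_lt hn).le hk h₁ h₂
  obtain ⟨fs, rfl, hfs, hS⟩ := c.exists_words_length_eq hn hj₁ hj₂
  exact ⟨fs, hjk, hfs, hS⟩

theorem exists_pad_mem_B_succ (hn : 1 ≤ n) {bs cs : List (List Bool)}
    (hbs : ∀ b ∈ bs, b ∈ c.B n) (hcs : ∀ b ∈ cs, b ∈ c.B n)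
    (hlen : bs.length + cs.length ≤ c.t n) :
    ∃ pad, bs.flatten ++ pad ++ cs.flatten ++ c.τ n ∈ c.B (n + 1) := by
  obtain ⟨b₀, hb₀, -⟩ := c.exists_length_eq hn le_rfl (c.s_le_l hn)
  refine ⟨(List.replicate (c.t n - bs.length - cs.length) b₀).flatten, (c.mem_B_succ hn).2
    ⟨bs ++ List.replicate (c.t n - bs.length - cs.length) b₀ ++ cs, by simp; omega, ?_, by simp⟩⟩
  intro b hb
  simp only [List.mem_append, List.mem_replicate] at hb
  rcases hb with (hb | ⟨-, rfl⟩) | hb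
  exacts [hbs b hb, hb₀, hcs b hb]

theorem words_succ_le_kstar (hn : 1 ≤ n) : c.words (n + 1) ≤ (c.words n)∗ := by
  intro w hw
  obtain ⟨bs, -, hbs, rfl⟩ := (c.mem_B_succ hn).1 hw
  exact kstar_mul_kstar (c.words n) ▸
    Language.append_mem_mul (Language.join_mem_kstar hbs) (c.τ_mem_kstar hn)

theorem words_le_kstar {j m : ℕ} (hj : 1 ≤ j) (hjm : j ≤ m) : c.words m ≤ (c.words j)∗ := by
  induction m, hjm using Nat.le_induction with
  | base => exact le_kstar
  | succ m hjm ih =>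
    exact (c.words_succ_le_kstar (hj.trans hjm)).trans ((kstar_mono ih).trans (kstar_idem _).le)

theorem mem_lang_X {k : ℕ} (hk : 1 ≤ k) {γ : List Bool} (hγ : γ ∈ c.B k) : γ ∈ lang c.X := by
  let β : ℕ → List Bool := fun i =>
    Nat.rec γ (fun i b => (List.replicate (c.t (k + i)) b).flatten ++ c.τ (k + i)) i
  have hβ : ∀ i, β i ∈ c.B (k + i) := fun i => by
    induction i with
    | zero => exact hγ
    | succ i ih =>
      exact (c.mem_B_succ (n := k + i) (by omega)).2 ⟨_, List.length_replicate, fun b hb =>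
        (List.eq_of_mem_replicate hb) ▸ ih, rfl⟩
  have hpre : ∀ i, β i <+: β (i + 1) ∧ (β i).length < (β (i + 1)).length := fun i => by
    obtain ⟨r, hr⟩ := Nat.exists_eq_add_of_le' (c.six_le_t (n := k + i) (by omega))
    have hτ := (c.s_pos (n := k + i) (by omega)).trans_le
      ((c.s_le_l (by omega)).trans (c.l_le_length_τ (by omega)))
    show β i <+: (List.replicate (c.t (k + i)) (β i)).flatten ++ c.τ (k + i) ∧
      (β i).length < ((List.replicate (c.t (k + i)) (β i)).flatten ++ c.τ (k + i)).length
    rw [hr, List.replicate_succ, List.flatten_cons, List.append_assoc]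
    exact ⟨List.prefix_append _ _, by simp only [List.length_append]; omega⟩
  have hlen : ∀ i, i < (β i).length := fun i => by
    induction i with
    | zero => exact List.length_pos_iff.2 (c.ne_nil_of_mem_B hk hγ)
    | succ i ih => exact Nat.lt_of_le_of_lt ih (hpre i).2
  obtain ⟨x, hx⟩ := exists_forall_getElem_eq_of_prefix (fun i => (hpre i).1) hlen
  refine mem_lang_of_forall_getElem (Set.mem_iInter.2 fun m => ?_) (hx 0)
  refine mem_codedShift_of_forall_exists (fun b => c.ne_nil_of_mem_B (by omega)) fun N => ?_
  obtain ⟨ws, hws, hmem⟩ := Language.mem_kstar.1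
    (c.words_le_kstar (j := m + 1) (by omega) (by omega) (hβ (N + m)))
  have := hlen (N + m)
  rw [hws] at this
  refine ⟨ws, hmem, by omega, fun i hi => ?_⟩
  simp only [← hws] at hi ⊢
  exact hx _ i hi

theorem exists_mem_B_succ_of_mem_lang (hn : 1 ≤ n) {u : List Bool} (hu : u ∈ lang c.X)
    (hlen : u.length ≤ c.s n) : ∃ p q, p ++ u ++ q ∈ c.B (n + 1) := by
  rcases eq_or_ne u [] with rfl | hu₀
  · obtain ⟨b, hb, -⟩ := c.exists_length_eq (n := n + 1) (by omega) le_rfl (c.s_le_l (by omega))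
    exact ⟨[], b, by simpa using hb⟩
  have hXn : c.X ⊆ codedShift (c.B n) := by
    obtain ⟨m, rfl⟩ := Nat.exists_eq_add_of_le' hn
    exact Set.iInter_subset _ m
  obtain ⟨bs, hbs, hinf⟩ := exists_infix_flatten_of_mem_lang
    (fun b => c.ne_nil_of_mem_B hn) (lang_mono hXn hu)
  obtain ⟨b₁, hb₁, b₂, hb₂, ⟨p, q, hpq⟩⟩ := exists_infix_append_of_infix_flatten hu₀
    (fun b hb => hlen.trans (c.length_mem_Icc hn (hbs b hb)).1) hinf
  obtain ⟨pad, hpad⟩ := c.exists_pad_mem_B_succ hn (bs := [b₁, b₂]) (cs := [])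
    (by simp [hbs _ hb₁, hbs _ hb₂]) (by simp) (by simp; have := c.six_le_t hn; omega)
  refine ⟨p, q ++ pad ++ c.τ n, ?_⟩
  simpa [← hpq] using hpad

theorem HasGap.of_append {p x q p' y q' : List Bool} {g : ℕ}
    (h : c.HasGap (p ++ x ++ q) (p' ++ y ++ q') g) : c.HasGap x y (q.length + g + p'.length) := by
  obtain ⟨v, rfl, hv⟩ := h
  exact ⟨q ++ v ++ p', by simp [Nat.add_assoc], lang_of_infix hv ⟨p, q', by simp⟩⟩

theorem hasGap_of_mem_B (hn : 1 ≤ n) {x y : List Bool} (hx : x ∈ c.B n) (hy : y ∈ c.B n)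
    {fs : List (List Bool)} (hfs : ∀ f ∈ fs, f ∈ c.B n) (hlen : fs.length + 2 ≤ c.t n) :
    c.HasGap x y fs.flatten.length := by
  obtain ⟨pad, hpad⟩ := c.exists_pad_mem_B_succ hn (bs := x :: fs ++ [y]) (cs := [])
    (by simpa [hx, hy, or_imp, forall_and] using hfs) (by simp) (by simp; omega)
  exact ⟨fs.flatten, rfl, lang_of_infix (c.mem_lang_X (by omega) hpad) ⟨[], pad ++ c.τ n, by simp⟩⟩

theorem hasGap_of_hasGap_succ (hn : 1 ≤ n) {x y : List Bool} (hx : x ∈ c.B n)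
    (hy : y ∈ c.B n) {fs : List (List Bool)} (hfs : ∀ f ∈ fs, f ∈ c.B n)
    (hlen : fs.length ≤ 2 * (c.t n - 1)) {g : ℕ}
    (hg : ∀ A ∈ c.B (n + 1), ∀ A' ∈ c.B (n + 1), c.HasGap A A' g) :
    c.HasGap x y (fs.flatten.length + (c.τ n).length + g) := by
  have ht := c.six_le_t hn
  obtain ⟨pad, hA⟩ := c.exists_pad_mem_B_succ hn (bs := []) (cs := x :: fs.take (c.t n - 1))
    (by simp) (by simpa [hx] using fun f hf => hfs f (List.mem_of_mem_take hf)) (by simp; omega)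
  obtain ⟨pad', hA'⟩ := c.exists_pad_mem_B_succ hn (bs := fs.drop (c.t n - 1) ++ [y]) (cs := [])
    (by simpa [hy, or_imp, forall_and] using fun f hf => hfs f (List.mem_of_mem_drop hf))
    (by simp) (by simp; omega)
  replace hA : pad ++ x ++ ((fs.take (c.t n - 1)).flatten ++ c.τ n) ∈ c.B (n + 1) := by
    simpa using hA
  replace hA' : (fs.drop (c.t n - 1)).flatten ++ y ++ (pad' ++ c.τ n) ∈ c.B (n + 1) := by
    simpa using hA'
  have h := (hg _ hA _ hA').of_append (p := pad) (q := (fs.take (c.t n - 1)).flatten ++ c.τ n)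
    (p' := (fs.drop (c.t n - 1)).flatten) (q' := pad' ++ c.τ n)
  have hsplit : fs.flatten.length =
      (fs.take (c.t n - 1)).flatten.length + (fs.drop (c.t n - 1)).flatten.length := by
    rw [← List.length_append, ← List.flatten_append, List.take_append_drop]
  convert h using 1
  simp only [List.length_append]
  omega

theorem hasGap_of_two_mul_s_le (g : ℕ) : ∀ n, 1 ≤ n → 2 * c.s n ≤ g →
    ∀ x ∈ c.B n, ∀ y ∈ c.B n, c.HasGap x y g := by
  induction g using Nat.strong_induction_on with
  | _ g ih =>
  intro n hn hg x hx y hy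
  have hn' : 1 ≤ n + 1 := by omega
  have ht := c.six_le_t hn
  have ht' := c.six_le_t hn'
  have hs := c.s_pos hn
  have hsl := c.s_le_l hn
  have hτ := c.l_le_length_τ hn
  have h6 := c.add_length_τ_le_t_mul_l hn
  have hts : c.t n * c.s n ≤ c.t n * c.l n := Nat.mul_le_mul_left _ hsl
  have hs' := c.s_succ hn
  have hl' := c.l_succ hn
  have e₁ : (c.t n - 2) * c.l n + 2 * c.l n = c.t n * c.l n := by
    rw [← Nat.add_mul, Nat.sub_add_cancel (by omega)]
  have e₂ : 2 * (c.t n - 1) * c.l n + 2 * c.l n = 2 * (c.t n * c.l n) := by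
    rw [Nat.mul_assoc, ← Nat.mul_add, ← Nat.add_one_mul, Nat.sub_add_cancel (by omega)]
  rcases le_or_gt g ((c.t n - 2) * c.l n) with h₁ | h₁
  · obtain ⟨fs, hlen, hfs, rfl⟩ := c.exists_words_of_two_mul_s_le hn (by omega) hg h₁
    exact c.hasGap_of_mem_B hn hx hy hfs (by omega)
  obtain ⟨g, rfl⟩ : ∃ g₀, g = (c.τ n).length + g₀ := ⟨g - (c.τ n).length, by omega⟩
  suffices ∃ fs : List (List Bool), (∀ f ∈ fs, f ∈ c.B n) ∧ fs.length ≤ 2 * (c.t n - 1) ∧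
      ∃ g', (∀ A ∈ c.B (n + 1), ∀ A' ∈ c.B (n + 1), c.HasGap A A' g') ∧
        fs.flatten.length + g' = g by
    obtain ⟨fs, hfs, hlen, g', hg', rfl⟩ := this
    convert c.hasGap_of_hasGap_succ hn hx hy hfs hlen hg' using 1
    omega
  rcases le_or_gt g (2 * (c.t n - 1) * c.l n) with h₂ | h₂
  · obtain ⟨fs, hlen, hfs, rfl⟩ := c.exists_words_of_two_mul_s_le hn (by omega) (by omega) h₂
    exact ⟨fs, hfs, hlen, 0, fun A hA A' hA' =>
      c.hasGap_of_mem_B hn' hA hA' (fs := []) (by simp) (by simp; omega), rfl⟩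
  rcases le_or_gt (2 * c.s (n + 1)) g with h₃ | h₃
  · exact ⟨[], by simp, by simp, g, fun A hA A' hA' => ih g (by omega) (n + 1) hn' h₃ A hA A' hA',
      by simp⟩
  obtain ⟨D, L, hD₁, hD₂, hL₁, hL₂, rfl⟩ := exists_add_eq_of_le_of_le (S := g)
    (a₁ := 2 * c.s n) (b₁ := 2 * (c.t n - 1) * c.l n) (by omega) (c.s_le_l hn') (by omega)
    (by omega)
  obtain ⟨fs, hlen, hfs, rfl⟩ := c.exists_words_of_two_mul_s_le hn (by omega) hD₁ hD₂
  obtain ⟨w, hw, rfl⟩ := c.exists_length_eq hn' hL₁ hL₂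
  exact ⟨fs, hfs, hlen, w.length, fun A hA A' hA' => by
    simpa using c.hasGap_of_mem_B hn' hA hA' (fs := [w]) (by simpa using hw) (by simp; omega),
    rfl⟩

theorem mixingShift_X : MixingShift c.X := by
  intro u hu w hw
  obtain ⟨n, hn, hun, hwn⟩ : ∃ n, 1 ≤ n ∧ u.length ≤ n ∧ w.length ≤ n :=
    ⟨1 + u.length + w.length, by omega, by omega, by omega⟩
  have hsn := c.self_le_s n hn
  obtain ⟨p, q, hx⟩ := c.exists_mem_B_succ_of_mem_lang hn hu (by omega)
  obtain ⟨p', q', hy⟩ := c.exists_mem_B_succ_of_mem_lang hn hw (by omega)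
  refine ⟨q.length + 2 * c.s (n + 1) + p'.length, fun m hm => ?_⟩
  obtain ⟨v, hv, hmem⟩ := (c.hasGap_of_two_mul_s_le (m - q.length - p'.length) (n + 1)
    (by omega) (by omega) _ hx _ hy).of_append
  exact ⟨v, by omega, hmem⟩

end BlockSystem

theorem statement18_general (B : ℕ → Finset (List Bool)) (t : ℕ → ℕ) (τ : ℕ → List Bool)
    (hB1 : B 1 = {[false], [true, true]})
    (hτ : ∀ n : ℕ, 1 ≤ n → ∃ l : List (List Bool), l.Perm (B n).toList ∧ τ n = l.flatten)
    (hrec : ∀ n : ℕ, 1 ≤ n → (B (n + 1) : Set (List Bool)) =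
      {w | ∃ bs : List (List Bool), bs.length = t n ∧ (∀ b ∈ bs, b ∈ B n) ∧
        w = bs.flatten ++ τ n})
    (hratio : ∀ n : ℕ, 1 ≤ n → ((minLen (B n) : ℝ) / (maxLen (B n) : ℝ) < 2 / 3))
    (ht6 : ∀ n : ℕ, 1 ≤ n →
      ((2 * (minLen (B n) : ℝ) + 2 * (maxLen (B n) : ℝ) + 3 * ((τ n).length : ℝ)) /
        (maxLen (B n) : ℝ) ≤ (t n : ℝ))) :
    MixingShift (⋂ n : ℕ, codedShift (B (n + 1))) :=
  BlockSystem.mixingShift_X ⟨B, t, τ, hB1, hτ, hrec, hratio, ht6⟩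

/-- under the stated conditions on `t(n)`, the intersection
`X = ⋂_{n≥1} X_n` of the coded shifts is topologically mixing. -/
theorem statement18 (B : ℕ → Finset (List Bool)) (t : ℕ → ℕ) (τ : ℕ → List Bool)
    (hB1 : B 1 = {[false], [true, true]})
    (ht2 : ∀ n : ℕ, 1 ≤ n → 2 ≤ t n)
    (hτ : ∀ n : ℕ, 1 ≤ n → ∃ l : List (List Bool), l.Perm (B n).toList ∧ τ n = l.flatten)
    (hrec : ∀ n : ℕ, 1 ≤ n → (B (n + 1) : Set (List Bool)) =
      {w | ∃ bs : List (List Bool), bs.length = t n ∧ (∀ b ∈ bs, b ∈ B n) ∧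
        w = bs.flatten ++ τ n})
    (hratio : ∀ n : ℕ, 1 ≤ n → ((minLen (B n) : ℝ) / (maxLen (B n) : ℝ) < 2 / 3))
    (ht5 : ∀ n : ℕ, 1 ≤ n →
      ((maxLen (B n) : ℝ) / ((maxLen (B n) : ℝ) - (minLen (B n) : ℝ)) ≤ (t n : ℝ)))
    (ht6 : ∀ n : ℕ, 1 ≤ n →
      ((2 * (minLen (B n) : ℝ) + 2 * (maxLen (B n) : ℝ) + 3 * ((τ n).length : ℝ)) /
        (maxLen (B n) : ℝ) ≤ (t n : ℝ))) :
    MixingShift (⋂ n : ℕ, codedShift (B (n + 1))) :=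
  statement18_general B t τ hB1 hτ hrec hratio ht6

end DbarPaper
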